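/- arXiv:2511.21110 — 9 statements merged into one kernel-verified Lean document; each statement's English description precedes it below -/
import Mathlib

section
/- Let (a_n)_{n≥1} be a nonincreasing sequence of positive real numbers with ∑_{n=1}^∞ a_n = 1, and suppose that a_n ≤ 1 − ∑_{k=1}^n a_k for all n ≥ 1. Then every real number r with 0 ≤ r ≤ 1 can be represented as r = ∑_{n=1}^∞ ε_n a_n for some choice of coefficients ε_n ∈ {0,1}. -/
/-!
Choose the digits greedily: take `a n` whenever it does not overshoot `r`. The partial sums
`S n` stay below `r`, and the gap `r - S n` never exceeds the tail `∑_{k ≥ n} a k`: if `a n` is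
taken, gap and tail both drop by `a n`; if it is skipped, the new gap is below `a n`, which the
hypothesis bounds by the new tail. As the tail tends to `0`, the greedy subsum is `r`.
-/

open Filter Finset Topology

namespace GreedyExpansion

variable (a : ℕ → ℝ) (r : ℝ)

noncomputable def partialSum : ℕ → ℝ
  | 0 => 0
  | n + 1 => if partialSum n + a n ≤ r then partialSum n + a n else partialSum n

noncomputable def digit (n : ℕ) : ℝ :=
  if partialSum a r n + a n ≤ r then 1 else 0

theorem digit_eq_zero_or_one (n : ℕ) : digit a r n = 0 ∨ digit a r n = 1 := by
  unfold digit
  split_ifs <;> simp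

theorem partialSum_succ (n : ℕ) :
    partialSum a r (n + 1) = partialSum a r n + digit a r n * a n := by
  simp only [partialSum, digit]
  split_ifs <;> ring

theorem sum_range_digit_mul (n : ℕ) :
    ∑ k ∈ range n, digit a r k * a k = partialSum a r n := by
  induction n with
  | zero => simp [partialSum]
  | succ n ih => rw [sum_range_succ, ih, partialSum_succ]

theorem partialSum_le (hr : 0 ≤ r) (n : ℕ) : partialSum a r n ≤ r := by
  induction n with
  | zero => exact hr
  | succ n ih =>
    simp only [partialSum]
    split_ifs with h
    exacts [h, ih]

theorem sub_partialSum_le {s : ℝ} (hcond : ∀ n, a n ≤ s - ∑ k ∈ range (n + 1), a k)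
    (hr : r ≤ s) (n : ℕ) : r - partialSum a r n ≤ s - ∑ k ∈ range n, a k := by
  induction n with
  | zero => simpa [partialSum] using hr
  | succ n ih =>
    have hn := hcond n
    simp only [partialSum, sum_range_succ] at hn ⊢
    split_ifs with h
    · linarith
    · linarith

theorem summable_digit_mul (ha : Summable a) : Summable fun n => digit a r n * a n := by
  refine ha.abs.of_norm_bounded fun n => ?_
  rcases digit_eq_zero_or_one a r n with h | h <;> simp [h]

theorem hasSum_digit_mul {s : ℝ} (ha : HasSum a s)
    (hcond : ∀ n, a n ≤ s - ∑ k ∈ range (n + 1), a k) (hr₀ : 0 ≤ r) (hr : r ≤ s) :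
    HasSum (fun n => digit a r n * a n) r := by
  rw [(summable_digit_mul a r ha.summable).hasSum_iff_tendsto_nat]
  simp only [sum_range_digit_mul]
  have htail : Tendsto (fun n => s - ∑ k ∈ range n, a k) atTop (𝓝 0) := by
    simpa using ha.tendsto_sum_nat.const_sub s
  have hgap : Tendsto (fun n => r - partialSum a r n) atTop (𝓝 0) :=
    squeeze_zero (fun n => sub_nonneg.2 (partialSum_le a r hr₀ n))
      (sub_partialSum_le a r hcond hr) htail
  simpa using hgap.const_sub r

end GreedyExpansion

theorem stmt0_general (a : ℕ → ℝ)
    (hsummable : Summable a) (hsum : (∑' n, a n) = 1)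
    (hcond : ∀ n, a n ≤ 1 - ∑ k ∈ Finset.range (n + 1), a k)
    (r : ℝ) (hr0 : 0 ≤ r) (hr1 : r ≤ 1) :
    ∃ ε : ℕ → ℝ, (∀ n, ε n = 0 ∨ ε n = 1) ∧ HasSum (fun n => ε n * a n) r :=
  ⟨GreedyExpansion.digit a r, GreedyExpansion.digit_eq_zero_or_one a r,
    GreedyExpansion.hasSum_digit_mul a r (hsum ▸ hsummable.hasSum) hcond hr0 hr1⟩

/-- If `(a_n)` is a nonincreasing positive sequence summing to `1` and
`a_n ≤ 1 − ∑_{k=1}^n a_k` for all `n`, then every `r ∈ [0,1]` is a subsum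
`r = ∑ ε_n a_n` with `ε_n ∈ {0,1}`. (Sequences are 0-indexed.) -/
theorem stmt0 (a : ℕ → ℝ) (hpos : ∀ n, 0 < a n) (hmono : Antitone a)
    (hsummable : Summable a) (hsum : (∑' n, a n) = 1)
    (hcond : ∀ n, a n ≤ 1 - ∑ k ∈ Finset.range (n + 1), a k)
    (r : ℝ) (hr0 : 0 ≤ r) (hr1 : r ≤ 1) :
    ∃ ε : ℕ → ℝ, (∀ n, ε n = 0 ∨ ε n = 1) ∧ HasSum (fun n => ε n * a n) r :=
  stmt0_general a hsummable hsum hcond r hr0 hr1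
end

section
/- Let (a_n)_{n≥1} be a nonincreasing sequence of positive real numbers with ∑_{n=1}^∞ a_n = 1. If every real number r with 0 ≤ r ≤ 1 can be represented as r = ∑_{n=1}^∞ ε_n a_n for some coefficients ε_n ∈ {0,1}, then a_n ≤ 1 − ∑_{k=1}^n a_k for all n ≥ 1. -/
/-!
If the tail `T = ∑_{k>n} a_k` were smaller than `a_n`, pick `r` strictly between them. A
representation of `r` cannot use any of `a_0, …, a_n`, since each of them is at least `a_n > r`;
so it only uses the tail, and then `r ≤ T`, a contradiction.
-/

section SubsumBounds

variable {a ε : ℕ → ℝ} {r : ℝ}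

theorem le_of_hasSum_mul_of_eq_one (ha : ∀ n, 0 ≤ a n) (hε : ∀ n, 0 ≤ ε n)
    (hs : HasSum (fun n => ε n * a n) r) {k : ℕ} (hk : ε k = 1) : a k ≤ r := by
  simpa [hk] using le_hasSum hs k fun j _ => mul_nonneg (hε j) (ha j)

theorem le_tsum_nat_add_of_hasSum_mul (ha : ∀ n, 0 ≤ a n) (hε : ∀ n, ε n ≤ 1)
    (hsa : Summable a) (hs : HasSum (fun n => ε n * a n) r) {m : ℕ}
    (hzero : ∀ k < m, ε k = 0) : r ≤ ∑' k, a (k + m) := by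
  have hsplit := hs.summable.sum_add_tsum_nat_add m
  rw [hs.tsum_eq, Finset.sum_eq_zero fun k hk => by simp [hzero k (Finset.mem_range.mp hk)],
    zero_add] at hsplit
  rw [← hsplit]
  exact Summable.tsum_le_tsum
    (fun k => mul_le_of_le_one_left (ha _) (hε _))
    ((summable_nat_add_iff m).2 hs.summable) ((summable_nat_add_iff m).2 hsa)

end SubsumBounds

theorem le_tsum_nat_add_succ_of_forall_subsum {a : ℕ → ℝ} (ha : ∀ n, 0 ≤ a n)
    (hmono : Antitone a) (hsa : Summable a)
    (hrep : ∀ r : ℝ, 0 ≤ r → r ≤ ∑' n, a n →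
      ∃ ε : ℕ → ℝ, (∀ n, ε n = 0 ∨ ε n = 1) ∧ HasSum (fun n => ε n * a n) r)
    (n : ℕ) : a n ≤ ∑' k, a (k + (n + 1)) := by
  by_contra! hlt
  set T := ∑' k, a (k + (n + 1))
  have hT : 0 ≤ T := tsum_nonneg fun k => ha _
  have han : a n ≤ ∑' k, a k := hsa.le_tsum n fun j _ => ha j
  obtain ⟨ε, hε, hs⟩ := hrep ((T + a n) / 2) (by linarith) (by linarith)
  have hε01 : ∀ k, 0 ≤ ε k ∧ ε k ≤ 1 := fun k => by rcases hε k with h | h <;> simp [h]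
  by_cases hzero : ∀ k < n + 1, ε k = 0
  · have := le_tsum_nat_add_of_hasSum_mul ha (fun k => (hε01 k).2) hsa hs hzero
    linarith
  · push Not at hzero
    obtain ⟨k, hk, hεk⟩ := hzero
    have hak := le_of_hasSum_mul_of_eq_one ha (fun k => (hε01 k).1) hs ((hε k).resolve_left hεk)
    have := hmono (Nat.lt_succ_iff.mp hk)
    linarith

theorem stmt1_general (a : ℕ → ℝ) (hpos : ∀ n, 0 < a n) (hmono : Antitone a)
    (hsum : (∑' n, a n) = 1)
    (hrep : ∀ r : ℝ, 0 ≤ r → r ≤ 1 →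
      ∃ ε : ℕ → ℝ, (∀ n, ε n = 0 ∨ ε n = 1) ∧ HasSum (fun n => ε n * a n) r) :
    ∀ n, a n ≤ 1 - ∑ k ∈ Finset.range (n + 1), a k := by
  intro n
  have hsa : Summable a := by
    by_contra h
    simp [tsum_eq_zero_of_not_summable h] at hsum
  have hsplit := hsa.sum_add_tsum_nat_add (n + 1)
  have htail := le_tsum_nat_add_succ_of_forall_subsum (fun k => (hpos k).le) hmono hsa
    (by rwa [hsum]) n
  linarith

/-- If `(a_n)` is a nonincreasing positive sequence summing to `1` and every
`r ∈ [0,1]` is a subsum `r = ∑ ε_n a_n` with `ε_n ∈ {0,1}`, then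
`a_n ≤ 1 − ∑_{k=1}^n a_k` for all `n`. (Sequences are 0-indexed.) -/
theorem stmt1 (a : ℕ → ℝ) (hpos : ∀ n, 0 < a n) (hmono : Antitone a)
    (hsummable : Summable a) (hsum : (∑' n, a n) = 1)
    (hrep : ∀ r : ℝ, 0 ≤ r → r ≤ 1 →
      ∃ ε : ℕ → ℝ, (∀ n, ε n = 0 ∨ ε n = 1) ∧ HasSum (fun n => ε n * a n) r) :
    ∀ n, a n ≤ 1 - ∑ k ∈ Finset.range (n + 1), a k :=
  stmt1_general a hpos hmono hsum hrep
end

section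
/- Let (a_n)_{n≥1} be a nonincreasing sequence of positive real numbers with ∑_{n=1}^∞ a_n = 1. Then every real number r with 0 ≤ r ≤ 1 can be represented as r = ∑_{n=1}^∞ ε_n a_n with ε_n ∈ {0,1} for all n, if and only if a_n ≤ 1 − ∑_{k=1}^n a_k for all n ≥ 1. -/
/-!
If every `r ∈ [0, s]` is a `{0,1}`-subsum and some term `a n` exceeds the tail
`T = s - ∑_{k ≤ n} a k`, then a point `r ∈ (T, a n)` cannot be a subsum: using any
of `a 0, …, a n` already overshoots `r` by monotonicity, and using none of them
leaves at most `T`. Conversely, when every term is at most its tail, the greedy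
expansion of `r` (take `a n` whenever it still fits) keeps the remainder
`r - (greedy partial sum)` below the tail `s - ∑_{k < n} a k`, which tends to `0`.
-/

open Finset Filter Topology

def IsSubsum (a : ℕ → ℝ) (r : ℝ) : Prop :=
  ∃ ε : ℕ → ℝ, (∀ n, ε n = 0 ∨ ε n = 1) ∧ HasSum (fun n => ε n * a n) r

section Binary

variable {ε a : ℕ → ℝ}

lemma mul_nonneg_of_eq_zero_or_one (hε : ∀ n, ε n = 0 ∨ ε n = 1) (ha : ∀ n, 0 ≤ a n) (n : ℕ) :
    0 ≤ ε n * a n := by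
  rcases hε n with h | h <;> simp [h, ha n]

lemma mul_le_of_eq_zero_or_one (hε : ∀ n, ε n = 0 ∨ ε n = 1) (ha : ∀ n, 0 ≤ a n) (n : ℕ) :
    ε n * a n ≤ a n := by
  rcases hε n with h | h <;> simp [h, ha n]

end Binary

section Necessity

variable {a : ℕ → ℝ} {s : ℝ}

lemma hasSum_binary_le_sub_sum_range {ε : ℕ → ℝ} {r : ℝ} {m : ℕ} (ha0 : ∀ n, 0 ≤ a n)
    (ha : HasSum a s) (hε : ∀ n, ε n = 0 ∨ ε n = 1) (hεm : ∀ k < m, ε k = 0)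
    (hr : HasSum (fun n => ε n * a n) r) : r ≤ s - ∑ k ∈ range m, a k := by
  have hhead : ∑ k ∈ range m, ε k * a k = 0 :=
    sum_eq_zero fun k hk => by rw [hεm k (mem_range.mp hk), zero_mul]
  have hr_tail : HasSum (fun n => ε (n + m) * a (n + m)) r := by
    simpa [hhead] using (hasSum_nat_add_iff' m).2 hr
  exact hasSum_le (fun n => mul_le_of_eq_zero_or_one hε ha0 (n + m)) hr_tail
    ((hasSum_nat_add_iff' m).2 ha)

lemma le_sub_sum_range_of_forall_isSubsum (ha0 : ∀ n, 0 ≤ a n) (hmono : Antitone a)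
    (ha : HasSum a s) (hsub : ∀ r, 0 ≤ r → r ≤ s → IsSubsum a r) (n : ℕ) :
    a n ≤ s - ∑ k ∈ range (n + 1), a k := by
  by_contra! hlt
  set T := s - ∑ k ∈ range (n + 1), a k
  have hT : 0 ≤ T := sub_nonneg.2 (sum_le_hasSum _ (fun i _ => ha0 i) ha)
  have hT_add : T + a n ≤ s := by
    simp only [T, sum_range_succ]
    linarith [sum_nonneg fun i (_ : i ∈ range n) => ha0 i]
  obtain ⟨ε, hε, hr⟩ := hsub ((T + a n) / 2) (by linarith) (by linarith)
  by_cases hhead : ∃ k ≤ n, ε k = 1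
  · obtain ⟨k, hkn, hk⟩ := hhead
    have : ε k * a k ≤ (T + a n) / 2 :=
      le_hasSum hr k fun j _ => mul_nonneg_of_eq_zero_or_one hε ha0 j
    rw [hk, one_mul] at this
    linarith [hmono hkn]
  · push Not at hhead
    have := hasSum_binary_le_sub_sum_range (m := n + 1) ha0 ha hε
      (fun k hk => (hε k).resolve_right (hhead k (Nat.lt_succ_iff.mp hk))) hr
    linarith

end Necessity

section Greedy

variable (a : ℕ → ℝ) (r : ℝ)

noncomputable def greedySum : ℕ → ℝ
  | 0 => 0
  | n + 1 => if greedySum n + a n ≤ r then greedySum n + a n else greedySum n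

noncomputable def greedyDigit (n : ℕ) : ℝ :=
  if greedySum a r n + a n ≤ r then 1 else 0

lemma greedyDigit_eq_zero_or_one (n : ℕ) : greedyDigit a r n = 0 ∨ greedyDigit a r n = 1 := by
  unfold greedyDigit
  split_ifs <;> simp

lemma greedySum_succ (n : ℕ) :
    greedySum a r (n + 1) = greedySum a r n + greedyDigit a r n * a n := by
  simp only [greedySum, greedyDigit]
  split_ifs <;> simp

lemma sum_range_greedyDigit_mul (n : ℕ) :
    ∑ k ∈ range n, greedyDigit a r k * a k = greedySum a r n := by
  induction n with
  | zero => simp [greedySum]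
  | succ n ih => rw [sum_range_succ, ih, greedySum_succ]

variable {a r}

lemma greedySum_le (hr : 0 ≤ r) (n : ℕ) : greedySum a r n ≤ r := by
  induction n with
  | zero => exact hr
  | succ n ih =>
    simp only [greedySum]
    split_ifs with h
    exacts [h, ih]

lemma sub_greedySum_le {s : ℝ} (hcond : ∀ n, a n ≤ s - ∑ k ∈ range (n + 1), a k) (hrs : r ≤ s)
    (n : ℕ) : r - greedySum a r n ≤ s - ∑ k ∈ range n, a k := by
  induction n with
  | zero => simpa [greedySum] using hrs
  | succ n ih =>
    simp only [greedySum]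
    split_ifs with h
    · rw [sum_range_succ]
      linarith
    · linarith [hcond n]

lemma isSubsum_of_le_sub_sum_range {s : ℝ} (ha0 : ∀ n, 0 ≤ a n) (ha : HasSum a s)
    (hcond : ∀ n, a n ≤ s - ∑ k ∈ range (n + 1), a k) (hr0 : 0 ≤ r) (hrs : r ≤ s) :
    IsSubsum a r := by
  refine ⟨greedyDigit a r, greedyDigit_eq_zero_or_one a r, ?_⟩
  rw [hasSum_iff_tendsto_nat_of_nonneg
    (mul_nonneg_of_eq_zero_or_one (greedyDigit_eq_zero_or_one a r) ha0)]
  simp only [sum_range_greedyDigit_mul]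
  have htail : Tendsto (fun n => s - ∑ k ∈ range n, a k) atTop (𝓝 0) := by
    simpa using ha.tendsto_sum_nat.const_sub s
  have hrem : Tendsto (fun n => r - greedySum a r n) atTop (𝓝 0) :=
    squeeze_zero (fun n => sub_nonneg.2 (greedySum_le hr0 n)) (sub_greedySum_le hcond hrs) htail
  simpa using hrem.const_sub r

end Greedy

/-- For a nonincreasing positive sequence `(a_n)` summing to `1`, every
`r ∈ [0,1]` is a subsum `r = ∑ ε_n a_n`, `ε_n ∈ {0,1}`, if and only if
`a_n ≤ 1 − ∑_{k=1}^n a_k` for all `n`. (Sequences are 0-indexed.) -/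
theorem stmt2 (a : ℕ → ℝ) (hpos : ∀ n, 0 < a n) (hmono : Antitone a)
    (hsummable : Summable a) (hsum : (∑' n, a n) = 1) :
    (∀ r : ℝ, 0 ≤ r → r ≤ 1 →
      ∃ ε : ℕ → ℝ, (∀ n, ε n = 0 ∨ ε n = 1) ∧ HasSum (fun n => ε n * a n) r) ↔
    (∀ n, a n ≤ 1 - ∑ k ∈ Finset.range (n + 1), a k) := by
  have ha0 : ∀ n, 0 ≤ a n := fun n => (hpos n).le
  have ha : HasSum a 1 := hsum ▸ hsummable.hasSum
  exact ⟨le_sub_sum_range_of_forall_isSubsum ha0 hmono ha,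
    fun hcond r hr0 hr1 => isSubsum_of_le_sub_sum_range ha0 ha hcond hr0 hr1⟩
end

section
/- Let (a_n)_{n≥1} be a nonincreasing sequence of positive real numbers with ∑_{n=1}^∞ a_n = 1 satisfying a_n ≤ 1 − ∑_{k=1}^n a_k for all n ≥ 1, and let r ∈ [0,1]. Define recursively ε_0 = 0, r_0 = 0, and for n ≥ 1: ε_n = 1 if a_n ≤ r − r_{n−1} and ε_n = 0 otherwise, and r_n = r_{n−1} + ε_n a_n. Then for every n ≥ 1 one has 0 ≤ r − r_n ≤ 1 − ∑_{k=1}^n a_k; in particular r_n → r as n → ∞, so r = ∑_{n=1}^∞ ε_n a_n. -/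
/-!
The remainder `r - R n` is squeezed between `0` and the tail `s - ∑_{k<n} a k`. If the greedy
step takes `a n`, the remainder and the tail both drop by `a n`; if it skips `a n`, then the
remainder is already below `a n`, which by hypothesis is at most the new tail. Since the tails
tend to `0`, `R n → r`, and `R n` are the partial sums of `ε n * a n`.
-/

open Filter Topology Finset

theorem greedy_step_mem_Icc {x t c : ℝ} (hx : 0 ≤ x) (hxt : x ≤ t) (hc : c ≤ t - c) :
    0 ≤ x - (if c ≤ x then 1 else 0) * c ∧ x - (if c ≤ x then 1 else 0) * c ≤ t - c := by
  split_ifs <;> constructor <;> linarith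

theorem greedy_remainder_mem_Icc {a ε R : ℕ → ℝ} {r s : ℝ}
    (hcond : ∀ n, a n ≤ s - ∑ k ∈ range (n + 1), a k) (hr0 : 0 ≤ r) (hrs : r ≤ s)
    (hR0 : R 0 = 0) (hε : ∀ n, ε n = if a n ≤ r - R n then 1 else 0)
    (hR : ∀ n, R (n + 1) = R n + ε n * a n) (n : ℕ) :
    0 ≤ r - R n ∧ r - R n ≤ s - ∑ k ∈ range n, a k := by
  induction n with
  | zero => simpa [hR0] using ⟨hr0, hrs⟩
  | succ n ih =>
    have hcn : a n ≤ (s - ∑ k ∈ range n, a k) - a n := by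
      linarith [hcond n, sum_range_succ a n]
    have step := greedy_step_mem_Icc ih.1 ih.2 hcn
    rw [← hε n] at step
    rw [hR n, sum_range_succ]
    constructor <;> linarith [step.1, step.2]

theorem tendsto_of_sub_le_tail {a R : ℕ → ℝ} {r s : ℝ} (ha : HasSum a s)
    (h : ∀ n, 0 ≤ r - R n ∧ r - R n ≤ s - ∑ k ∈ range n, a k) :
    Tendsto R atTop (𝓝 r) := by
  have htail : Tendsto (fun n => s - ∑ k ∈ range n, a k) atTop (𝓝 0) := by
    simpa using (tendsto_const_nhds (x := s)).sub ha.tendsto_sum_nat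
  have hrem : Tendsto (fun n => r - R n) atTop (𝓝 0) :=
    squeeze_zero (fun n => (h n).1) (fun n => (h n).2) htail
  simpa using (tendsto_const_nhds (x := r)).sub hrem

theorem Summable.mul_of_abs_le_one {ι : Type*} {a ε : ι → ℝ} (ha : Summable a) (hε : ∀ n, |ε n| ≤ 1) :
    Summable fun n => ε n * a n :=
  ha.abs.of_norm_bounded fun n => by
    rw [Real.norm_eq_abs, abs_mul]
    exact mul_le_of_le_one_left (abs_nonneg _) (hε n)

open Classical in
/-- Indexing: `R n` is the paper's `r_n` and `ε n` is the paper's `ε_{n+1}`. -/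
theorem stmt3_general (a : ℕ → ℝ)
    (hsummable : Summable a) (hsum : (∑' n, a n) = 1)
    (hcond : ∀ n, a n ≤ 1 - ∑ k ∈ Finset.range (n + 1), a k)
    (r : ℝ) (hr0 : 0 ≤ r) (hr1 : r ≤ 1)
    (ε R : ℕ → ℝ) (hR0 : R 0 = 0)
    (hε : ∀ n, ε n = if a n ≤ r - R n then 1 else 0)
    (hR : ∀ n, R (n + 1) = R n + ε n * a n) :
    (∀ n, 0 ≤ r - R (n + 1) ∧ r - R (n + 1) ≤ 1 - ∑ k ∈ Finset.range (n + 1), a k) ∧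
    Filter.Tendsto R Filter.atTop (nhds r) ∧
    HasSum (fun n => ε n * a n) r := by
  have hrem := greedy_remainder_mem_Icc hcond hr0 hr1 hR0 hε hR
  have hlim : Tendsto R atTop (𝓝 r) := tendsto_of_sub_le_tail (hsum ▸ hsummable.hasSum) hrem
  have hε_abs : ∀ n, |ε n| ≤ 1 := fun n => by rw [hε n]; split_ifs <;> norm_num
  have hpartial : ∀ n, ∑ k ∈ range n, ε k * a k = R n := fun n =>
    sum_range_induction _ R hR0 n fun k _ => hR k
  refine ⟨fun n => hrem (n + 1), hlim, ?_⟩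
  rw [(hsummable.mul_of_abs_le_one hε_abs).hasSum_iff_tendsto_nat]
  simpa only [hpartial] using hlim

open Classical in
/-- Greedy algorithm: with `ε_n = 1` iff `a_n ≤ r − r_{n−1}` and
`r_n = r_{n−1} + ε_n a_n` (here `R n` is the paper's `r_n` and `ε n` is the
paper's `ε_{n+1}`, sequences being 0-indexed), one has
`0 ≤ r − r_n ≤ 1 − ∑_{k=1}^n a_k` for every `n ≥ 1`; in particular `r_n → r`
and `r = ∑ ε_n a_n`. -/
theorem stmt3 (a : ℕ → ℝ) (hpos : ∀ n, 0 < a n) (hmono : Antitone a)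
    (hsummable : Summable a) (hsum : (∑' n, a n) = 1)
    (hcond : ∀ n, a n ≤ 1 - ∑ k ∈ Finset.range (n + 1), a k)
    (r : ℝ) (hr0 : 0 ≤ r) (hr1 : r ≤ 1)
    (ε R : ℕ → ℝ) (hR0 : R 0 = 0)
    (hε : ∀ n, ε n = if a n ≤ r - R n then 1 else 0)
    (hR : ∀ n, R (n + 1) = R n + ε n * a n) :
    (∀ n, 0 ≤ r - R (n + 1) ∧ r - R (n + 1) ≤ 1 - ∑ k ∈ Finset.range (n + 1), a k) ∧
    Filter.Tendsto R Filter.atTop (nhds r) ∧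
    HasSum (fun n => ε n * a n) r :=
  stmt3_general a hsummable hsum hcond r hr0 hr1 ε R hR0 hε hR
end

section
/- Let (k_n)_{n≥1} be a sequence of integers with k_n ≥ 2 for all n, and let a be the real sequence obtained by concatenating, for n = 1, 2, 3, …, a block of k_n − 1 consecutive entries each equal to 1/(k_1 k_2 ⋯ k_n). Then a belongs to K: a is positive, nonincreasing, summable with ∑_{j=1}^∞ a_j = 1, and satisfies a_j ≤ ∑_{i=j+1}^∞ a_i for all j ≥ 1. -/
/-!
Write `s m = ∑_{i<m} (k_i - 1)` for the start of the `m`-th block and `P m = k_0 ⋯ k_{m-1}`.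
The `m`-th block has `k_m - 1` entries equal to `1 / (P m k_m)`, so it contributes
`1 / P m - 1 / P (m + 1)`; the sums telescope to `∑_{j < s M} a_j = 1 - 1 / P M`, and since
`P M ≥ 2 ^ M` the total is `1`. Hence the tail starting at `s (m + 1)` equals `1 / P (m + 1)`,
which is exactly the value of every entry of block `m`: for `j` in block `m`, the tail after `j`
contains that tail and so dominates `a_j`.
-/

/-- `K` is the set of nonincreasing positive summable sequences with sum at
most `1` satisfying `a_n ≤ ∑_{k>n} a_k` for all `n` (0-indexed). -/
def K : Set (ℕ → ℝ) :=
  {a | (∀ n, 0 < a n) ∧ Antitone a ∧ Summable a ∧ (∑' n, a n) ≤ 1 ∧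
    ∀ n, a n ≤ ∑' i, a (n + 1 + i)}

theorem tsum_nat_add_le_of_le {f : ℕ → ℝ} (hf : Summable f) (h0 : ∀ i, 0 ≤ f i) {m n : ℕ}
    (hmn : m ≤ n) : ∑' i, f (n + i) ≤ ∑' i, f (m + i) := by
  have key := tsum_comp_le_tsum_of_inj (hf.comp_injective (add_right_injective m))
    (fun i => h0 (m + i)) (add_right_injective (n - m))
  refine le_of_eq_of_le (tsum_congr fun i => ?_) key
  simp only [Function.comp_apply]
  congr 1
  omega

namespace BlockSequence

open Finset Filter Topology

def blockStart (k : ℕ → ℕ) (m : ℕ) : ℕ := ∑ i ∈ range m, (k i - 1)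

noncomputable def blockProd (k : ℕ → ℕ) (m : ℕ) : ℝ := ∏ i ∈ range m, (k i : ℝ)

def IsBlockSequence (k : ℕ → ℕ) (a : ℕ → ℝ) : Prop :=
  ∀ m j, blockStart k m ≤ j → j < blockStart k (m + 1) → a j = 1 / blockProd k (m + 1)

variable {k : ℕ → ℕ}

theorem blockStart_zero : blockStart k 0 = 0 := sum_range_zero _

theorem blockStart_succ (m : ℕ) : blockStart k (m + 1) = blockStart k m + (k m - 1) :=
  sum_range_succ _ _

theorem blockStart_strictMono (hk : ∀ n, 2 ≤ k n) : StrictMono (blockStart k) :=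
  strictMono_nat_of_lt_succ fun m => by have := hk m; rw [blockStart_succ]; omega

theorem exists_mem_block (hk : ∀ n, 2 ≤ k n) (j : ℕ) :
    ∃ m, blockStart k m ≤ j ∧ j < blockStart k (m + 1) := by
  obtain ⟨m, h₁, h₂⟩ := (blockStart_strictMono hk).exists_between_of_tendsto_atTop
    (blockStart_strictMono hk).tendsto_atTop (x := j + 1) (by rw [blockStart_zero]; omega)
  exact ⟨m, by omega, by omega⟩

theorem blockProd_succ (m : ℕ) : blockProd k (m + 1) = blockProd k m * k m :=
  prod_range_succ _ _

theorem blockProd_pos (hk : ∀ n, 0 < k n) (m : ℕ) : 0 < blockProd k m :=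
  prod_pos fun i _ => Nat.cast_pos.mpr (hk i)

theorem blockProd_mono (hk : ∀ n, 0 < k n) : Monotone (blockProd k) :=
  monotone_nat_of_le_succ fun m => by
    rw [blockProd_succ]
    exact le_mul_of_one_le_right (blockProd_pos hk m).le (Nat.one_le_cast.mpr (hk m))

theorem two_pow_le_blockProd (hk : ∀ n, 2 ≤ k n) (m : ℕ) : (2 : ℝ) ^ m ≤ blockProd k m := by
  simpa only [blockProd, prod_const, card_range] using
    prod_le_prod (s := range m) (f := fun _ => (2 : ℝ)) (fun _ _ => zero_le_two)
      fun i _ => by exact_mod_cast hk i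

theorem tendsto_one_div_blockProd (hk : ∀ n, 2 ≤ k n) :
    Tendsto (fun m => 1 / blockProd k m) atTop (𝓝 0) := by
  simp only [one_div]
  exact (tendsto_atTop_mono (two_pow_le_blockProd hk)
    (tendsto_pow_atTop_atTop_of_one_lt one_lt_two)).inv_tendsto_atTop

variable {a : ℕ → ℝ}

theorem IsBlockSequence.pos (hk : ∀ n, 2 ≤ k n) (ha : IsBlockSequence k a) (j : ℕ) :
    0 < a j := by
  obtain ⟨m, h₁, h₂⟩ := exists_mem_block hk j
  rw [ha m j h₁ h₂]
  exact one_div_pos.mpr (blockProd_pos (fun n => zero_lt_two.trans_le (hk n)) _)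

theorem IsBlockSequence.antitone (hk : ∀ n, 2 ≤ k n) (ha : IsBlockSequence k a) :
    Antitone a := by
  intro j j' hjj'
  obtain ⟨m, hm₁, hm₂⟩ := exists_mem_block hk j
  obtain ⟨m', hm'₁, hm'₂⟩ := exists_mem_block hk j'
  have hmm' : m ≤ m' := by
    by_contra! h
    have := (blockStart_strictMono hk).monotone (show m' + 1 ≤ m by omega)
    omega
  rw [ha m j hm₁ hm₂, ha m' j' hm'₁ hm'₂]
  have hk₀ : ∀ n, 0 < k n := fun n => zero_lt_two.trans_le (hk n)
  exact one_div_le_one_div_of_le (blockProd_pos hk₀ _) (blockProd_mono hk₀ (by omega))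

theorem IsBlockSequence.sum_Ico_blockStart (hk : ∀ n, 2 ≤ k n) (ha : IsBlockSequence k a)
    (m : ℕ) : ∑ j ∈ Ico (blockStart k m) (blockStart k (m + 1)), a j =
      1 / blockProd k m - 1 / blockProd k (m + 1) := by
  rw [sum_congr rfl fun j hj => ha m j (mem_Ico.mp hj).1 (mem_Ico.mp hj).2, sum_const,
    Nat.card_Ico, blockStart_succ, Nat.add_sub_cancel_left, nsmul_eq_mul,
    Nat.cast_sub (by have := hk m; omega), blockProd_succ]
  have hP := (blockProd_pos (fun n => zero_lt_two.trans_le (hk n)) m).ne'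
  have hkm : (k m : ℝ) ≠ 0 := by have := hk m; positivity
  field_simp
  push_cast
  ring

theorem IsBlockSequence.sum_range_blockStart (hk : ∀ n, 2 ≤ k n) (ha : IsBlockSequence k a)
    (m : ℕ) : ∑ j ∈ range (blockStart k m), a j = 1 - 1 / blockProd k m := by
  induction m with
  | zero => simp [blockStart_zero, blockProd]
  | succ m ih =>
    rw [← sum_range_add_sum_Ico _ ((blockStart_strictMono hk).monotone (Nat.le_succ m)), ih,
      ha.sum_Ico_blockStart hk m]
    ring

theorem IsBlockSequence.hasSum (hk : ∀ n, 2 ≤ k n) (ha : IsBlockSequence k a) : HasSum a 1 := by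
  have h0 : ∀ j, 0 ≤ a j := fun j => (ha.pos hk j).le
  rw [hasSum_iff_tendsto_nat_of_nonneg h0, tendsto_iff_tendsto_subseq_of_monotone
    (fun _ _ hmn => sum_le_sum_of_subset_of_nonneg (range_mono hmn) fun j _ _ => h0 j)
    (blockStart_strictMono hk).tendsto_atTop]
  simp only [Function.comp_def, ha.sum_range_blockStart hk]
  simpa using tendsto_const_nhds.sub (tendsto_one_div_blockProd hk)

theorem IsBlockSequence.tsum_blockStart_add (hk : ∀ n, 2 ≤ k n) (ha : IsBlockSequence k a)
    (m : ℕ) : ∑' i, a (blockStart k m + i) = 1 / blockProd k m := by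
  have h := (ha.hasSum hk).summable.sum_add_tsum_nat_add (blockStart k m)
  rw [(ha.hasSum hk).tsum_eq, ha.sum_range_blockStart hk] at h
  simp only [add_comm _ (blockStart k m)] at h
  linarith

theorem IsBlockSequence.le_tsum_add (hk : ∀ n, 2 ≤ k n) (ha : IsBlockSequence k a) (j : ℕ) :
    a j ≤ ∑' i, a (j + 1 + i) := by
  obtain ⟨m, h₁, h₂⟩ := exists_mem_block hk j
  calc a j = 1 / blockProd k (m + 1) := ha m j h₁ h₂
    _ = ∑' i, a (blockStart k (m + 1) + i) := (ha.tsum_blockStart_add hk _).symm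
    _ ≤ ∑' i, a (j + 1 + i) :=
      tsum_nat_add_le_of_le (ha.hasSum hk).summable (fun i => (ha.pos hk i).le) h₂

end BlockSequence

open BlockSequence

/-- If `a` is obtained by concatenating, for `m = 0, 1, 2, …`, a block of
`k_m − 1` entries each equal to `1/(k_0 ⋯ k_m)` (here 0-indexed: the paper's
`k_{m+1}` is `k m`), then `a ∈ K`: it is positive, nonincreasing, summable
with total sum `1`, and `a_j ≤ ∑_{i>j} a_i` for all `j`. -/
theorem stmt7 (k : ℕ → ℕ) (hk : ∀ n, 2 ≤ k n) (a : ℕ → ℝ)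
    (ha : ∀ m j : ℕ, (∑ i ∈ Finset.range m, (k i - 1)) ≤ j →
      j < ∑ i ∈ Finset.range (m + 1), (k i - 1) →
      a j = 1 / ∏ i ∈ Finset.range (m + 1), (k i : ℝ)) :
    a ∈ K ∧ (∑' j, a j) = 1 := by
  have hblock : IsBlockSequence k a := ha
  have hsum := hblock.hasSum hk
  exact ⟨⟨hblock.pos hk, hblock.antitone hk, hsum.summable, hsum.tsum_eq.le,
    hblock.le_tsum_add hk⟩, hsum.tsum_eq⟩
end

section
/- Fix an integer m ≥ 2 and let K_m = { a ∈ K : a_1 = a_2 = … = a_{m−1} = 1/m }. Then K_m is a face of K: whenever b, c ∈ K, 0 < λ < 1, and λb + (1−λ)c ∈ K_m, one has b ∈ K_m and c ∈ K_m. -/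
/-- `K_m`: elements of `K` whose first `m − 1` entries all equal `1/m`
(0-indexed: entries `a_0, …, a_{m−2}`). -/
def Km (m : ℕ) : Set (ℕ → ℝ) :=
  {a | a ∈ K ∧ ∀ i, i + 1 < m → a i = 1 / (m : ℝ)}

/-!
Every `a ∈ K` satisfies `∑_{i ≤ n} a_i + a_n ≤ 1`, and antitonicity bounds the finite sum below by
`(n + 1) a_n`; hence `a_n ≤ 1 / (n + 2)`, with equality at `n = m - 2` forcing
`a_0 = ⋯ = a_{m-2} = 1 / m`. So `K_m` is the set of points of `K` where the linear functional
`a ↦ a_{m-2}` attains its maximum `1 / m` over `K`, and such a set is a face.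
-/

section

variable {a : ℕ → ℝ}

theorem sum_range_add_apply_le_one_of_mem_K (ha : a ∈ K) (n : ℕ) :
    ∑ i ∈ Finset.range (n + 1), a i + a n ≤ 1 := by
  obtain ⟨-, -, hsum, hle, htail⟩ := ha
  have hshift : ∑' i, a (n + 1 + i) = ∑' i, a (i + (n + 1)) := by simp only [add_comm]
  linarith [hsum.sum_add_tsum_nat_add (n + 1), htail n]

theorem apply_le_one_div_of_mem_K (ha : a ∈ K) (n : ℕ) : a n ≤ 1 / (n + 2) := by
  have hanti : ∑ _i ∈ Finset.range (n + 1), a n ≤ ∑ i ∈ Finset.range (n + 1), a i :=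
    Finset.sum_le_sum fun i hi => ha.2.1 (Finset.mem_range_succ_iff.mp hi)
  rw [Finset.sum_const, Finset.card_range, nsmul_eq_mul] at hanti
  rw [le_div_iff₀ (by positivity)]
  push_cast at hanti
  linarith [sum_range_add_apply_le_one_of_mem_K ha n]

theorem mem_Km_of_apply_eq (ha : a ∈ K) {n : ℕ} (hn : a n = 1 / (n + 2)) : a ∈ Km (n + 2) := by
  refine ⟨ha, fun i hi => ?_⟩
  have hlow : ∀ j ∈ Finset.range (n + 1), 1 / ((n : ℝ) + 2) ≤ a j := fun j hj =>
    hn ▸ ha.2.1 (Finset.mem_range_succ_iff.mp hj)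
  have hsum : ∑ i ∈ Finset.range (n + 1), a i ≤ ∑ _i ∈ Finset.range (n + 1), 1 / ((n : ℝ) + 2) := by
    rw [Finset.sum_const, Finset.card_range, nsmul_eq_mul]
    have := sum_range_add_apply_le_one_of_mem_K ha n
    rw [hn] at this
    field_simp at this ⊢
    push_cast
    linarith
  have hall := (Finset.sum_eq_sum_iff_of_le hlow).mp (le_antisymm (Finset.sum_le_sum hlow) hsum)
  push_cast
  exact (hall i (Finset.mem_range.mpr (by omega))).symm

end

theorem eq_and_eq_of_le_of_convex_combination_eq {α : Type*} [Field α] [LinearOrder α]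
    [IsStrictOrderedRing α] {lam x y t : α} (h0 : 0 < lam) (h1 : lam < 1) (hx : x ≤ t)
    (hy : y ≤ t) (h : lam * x + (1 - lam) * y = t) : x = t ∧ y = t := by
  constructor <;> nlinarith

/-- `K_m` is a face of `K`: if `b, c ∈ K`, `0 < λ < 1` and
`λb + (1−λ)c ∈ K_m`, then `b ∈ K_m` and `c ∈ K_m`. -/
theorem stmt9 (m : ℕ) (hm : 2 ≤ m) (b c : ℕ → ℝ) (hb : b ∈ K) (hc : c ∈ K)
    (lam : ℝ) (h0 : 0 < lam) (h1 : lam < 1)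
    (hmem : (fun n => lam * b n + (1 - lam) * c n) ∈ Km m) :
    b ∈ Km m ∧ c ∈ Km m := by
  obtain ⟨n, rfl⟩ : ∃ n, m = n + 2 := ⟨m - 2, by omega⟩
  have hmid : lam * b n + (1 - lam) * c n = 1 / ((n : ℝ) + 2) := by
    simpa using hmem.2 n (by omega)
  obtain ⟨hbn, hcn⟩ := eq_and_eq_of_le_of_convex_combination_eq h0 h1
    (apply_le_one_div_of_mem_K hb n) (apply_le_one_div_of_mem_K hc n) hmid
  exact ⟨mem_Km_of_apply_eq hb hbn, mem_Km_of_apply_eq hc hcn⟩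
end

section
/- Let m ≥ 2 be an integer and let a ∈ K satisfy a_1 = a_2 = … = a_{m−1} > a_m. If a is an extreme point of K, then a_1 = … = a_{m−1} = 1/m and the shifted-and-rescaled sequence (m a_m, m a_{m+1}, m a_{m+2}, …) is an extreme point of K. -/
/-- `x` is an extreme point of `S`: `x ∈ S` and whenever
`x = λy + (1−λ)z` with `y, z ∈ S`, `0 < λ < 1`, one has `y = z = x`. -/
def IsExtremePt (S : Set (ℕ → ℝ)) (x : ℕ → ℝ) : Prop :=
  x ∈ S ∧ ∀ y ∈ S, ∀ z ∈ S, ∀ lam : ℝ, 0 < lam → lam < 1 →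
    x = (fun n => lam * y n + (1 - lam) * z n) → y = x ∧ z = x


def KCone : Set (ℕ → ℝ) :=
  {g | (∀ n, 0 < g n) ∧ Antitone g ∧ Summable g ∧ ∀ n, g n ≤ ∑' i, g (n + 1 + i)}

lemma mem_K_iff {a : ℕ → ℝ} : a ∈ K ↔ a ∈ KCone ∧ ∑' n, a n ≤ 1 := by
  constructor
  · rintro ⟨hpos, hanti, hsum, hle, htail⟩
    exact ⟨⟨hpos, hanti, hsum, htail⟩, hle⟩
  · rintro ⟨⟨hpos, hanti, hsum, htail⟩, hle⟩
    exact ⟨hpos, hanti, hsum, hle, htail⟩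

lemma smul_mem_KCone {r : ℝ} {g : ℕ → ℝ} (hr : 0 < r) (hg : g ∈ KCone) : r • g ∈ KCone := by
  obtain ⟨hpos, hanti, hsum, htail⟩ := hg
  refine ⟨fun n => mul_pos hr (hpos n), fun i j hij => ?_, hsum.const_smul r, fun n => ?_⟩
  · exact mul_le_mul_of_nonneg_left (hanti hij) hr.le
  · simp only [Pi.smul_apply, smul_eq_mul, tsum_mul_left]
    exact mul_le_mul_of_nonneg_left (htail n) hr.le

lemma shift_mem_KCone {g : ℕ → ℝ} (hg : g ∈ KCone) (k : ℕ) : (fun n => g (n + k)) ∈ KCone := by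
  obtain ⟨hpos, hanti, hsum, htail⟩ := hg
  refine ⟨fun n => hpos _, fun i j hij => hanti (by omega), (summable_nat_add_iff k).2 hsum,
    fun n => ?_⟩
  have e : ∀ i, n + k + 1 + i = n + 1 + i + k := fun i => by omega
  simpa only [e] using htail (n + k)

lemma smul_mem_K {r : ℝ} {a : ℕ → ℝ} (hr : 0 < r) (ha : a ∈ K) (hle : r * ∑' n, a n ≤ 1) :
    r • a ∈ K :=
  mem_K_iff.2 ⟨smul_mem_KCone hr (mem_K_iff.1 ha).1, by
    simpa only [Pi.smul_apply, smul_eq_mul, tsum_mul_left]⟩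

def prependConst (p : ℕ) (c : ℝ) (g : ℕ → ℝ) : ℕ → ℝ := fun n => if n < p then c else g (n - p)

section prependConst

variable {p : ℕ} {c : ℝ} {g : ℕ → ℝ}

lemma prependConst_of_lt {n : ℕ} (h : n < p) : prependConst p c g n = c := if_pos h

@[simp]
lemma prependConst_add (n : ℕ) : prependConst p c g (n + p) = g n := by
  simp [prependConst]

lemma eq_prependConst {a : ℕ → ℝ} (h : ∀ i < p, a i = c) :
    a = prependConst p c (fun i => a (i + p)) := by
  funext n
  by_cases hn : n < p
  · simp [prependConst, hn, h n hn]
  · simp [prependConst, hn, Nat.sub_add_cancel (not_lt.1 hn)]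

lemma prependConst_shift_of_le {k : ℕ} (hk : k ≤ p) :
    (fun i => prependConst p c g (k + i)) = prependConst (p - k) c g := by
  funext i
  by_cases hi : i < p - k
  · simp [prependConst, hi, show k + i < p by omega]
  · simp [prependConst, hi, show ¬ k + i < p by omega, show k + i - p = i - (p - k) by omega]

lemma prependConst_shift_of_ge {k : ℕ} (hk : p ≤ k) :
    (fun i => prependConst p c g (k + i)) = fun i => g (k - p + i) := by
  funext i
  simp [prependConst, show ¬ k + i < p by omega, show k + i - p = k - p + i by omega]

lemma summable_prependConst (hg : Summable g) : Summable (prependConst p c g) :=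
  (summable_nat_add_iff p).1 (by simpa using hg)

lemma tsum_prependConst (hg : Summable g) :
    ∑' n, prependConst p c g n = p * c + ∑' n, g n := by
  rw [← (summable_prependConst hg).sum_add_tsum_nat_add p]
  simp [Finset.sum_congr rfl fun i hi => prependConst_of_lt (g := g) (Finset.mem_range.1 hi)]

lemma prependConst_combo (t c₁ c₂ : ℝ) (g₁ g₂ : ℕ → ℝ) :
    (fun n => t * prependConst p c₁ g₁ n + (1 - t) * prependConst p c₂ g₂ n) =
      prependConst p (t * c₁ + (1 - t) * c₂) (fun n => t * g₁ n + (1 - t) * g₂ n) := by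
  funext n
  by_cases hn : n < p <;> simp [prependConst, hn]

lemma prependConst_mem_K (hg : g ∈ KCone) (hc : 0 < c) (hg0 : g 0 ≤ c)
    (hcT : c ≤ ∑' n, g n) (hS : p * c + ∑' n, g n ≤ 1) : prependConst p c g ∈ K := by
  obtain ⟨hpos, hanti, hsum, htail⟩ := hg
  refine ⟨fun n => ?_, fun i j hij => ?_, summable_prependConst hsum,
    (tsum_prependConst hsum).trans_le hS, fun n => ?_⟩
  · by_cases hn : n < p <;> simp [prependConst, hn, hc, hpos]
  · by_cases hj : j < p
    · simp [prependConst, hj, show i < p by omega]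
    by_cases hi : i < p
    · simpa [prependConst, hi, hj] using (hanti (Nat.zero_le _)).trans hg0
    · simpa [prependConst, hi, hj] using hanti (show i - p ≤ j - p by omega)
  · by_cases hn : n < p
    · rw [prependConst_of_lt hn, prependConst_shift_of_le (by omega),
        tsum_prependConst hsum]
      have : (0 : ℝ) ≤ ((p - (n + 1) : ℕ) : ℝ) * c := by positivity
      linarith
    · rw [prependConst_shift_of_ge (by omega)]
      simpa [prependConst, hn, show n + 1 - p = n - p + 1 by omega] using htail (n - p)

lemma prependConst_mem_K_iff (hp : 0 < p) :
    prependConst p c g ∈ K ↔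
      g ∈ KCone ∧ 0 < c ∧ g 0 ≤ c ∧ c ≤ ∑' n, g n ∧ p * c + ∑' n, g n ≤ 1 := by
  refine ⟨fun h => ?_, fun ⟨hg, hc, hg0, hcT, hS⟩ => prependConst_mem_K hg hc hg0 hcT hS⟩
  obtain ⟨hpos, hanti, hsum, hle, htail⟩ := h
  have hg : g ∈ KCone := by
    simpa using shift_mem_KCone (mem_K_iff.1 ⟨hpos, hanti, hsum, hle, htail⟩).1 p
  have hlast : prependConst p c g (p - 1) = c := prependConst_of_lt (by omega)
  refine ⟨hg, ?_, ?_, ?_, ?_⟩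
  · simpa [prependConst_of_lt hp] using hpos 0
  · have h := hanti (show p - 1 ≤ 0 + p by omega)
    rwa [prependConst_add, hlast] at h
  · have h := htail (p - 1)
    rwa [hlast, prependConst_shift_of_ge (by omega), show p - 1 + 1 - p = 0 by omega,
      funext fun i => congrArg g (zero_add i)] at h
  · rwa [← tsum_prependConst hg.2.2.1]

end prependConst

lemma IsExtremePt.tsum_eq_one {a : ℕ → ℝ} (hext : IsExtremePt K a) : ∑' n, a n = 1 := by
  obtain ⟨ha, hsplit⟩ := hext
  set S := ∑' n, a n
  have hS0 : 0 < S := by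
    obtain ⟨hpos, -, hsum, -⟩ := ha
    exact hsum.tsum_pos (fun n => (hpos n).le) 0 (hpos 0)
  by_contra hne
  have hS1 : S < 1 := lt_of_le_of_ne ha.2.2.2.1 hne
  -- `a` is the midpoint of `(2 - S) • a` and `S • a`, and `(2 - S) S ≤ 1`.
  have hy : (2 - S) • a ∈ K := smul_mem_K (by linarith) ha (by nlinarith)
  have hz : S • a ∈ K := smul_mem_K hS0 ha (by nlinarith)
  obtain ⟨hya, -⟩ := hsplit _ hy _ hz (1 / 2) (by norm_num) (by norm_num) <| by
    funext n; simp only [Pi.smul_apply, smul_eq_mul]; ring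
  have h0 := congrFun hya 0
  simp only [Pi.smul_apply, smul_eq_mul] at h0
  nlinarith [ha.1 0]

lemma IsExtremePt.eq_tsum_of_prependConst {p : ℕ} {c : ℝ} {g : ℕ → ℝ} (hp : 0 < p)
    (hext : IsExtremePt K (prependConst p c g)) (hg0 : g 0 < c) : c = ∑' n, g n := by
  obtain ⟨hg, hc, -, hcT, hS⟩ := (prependConst_mem_K_iff hp).1 hext.1
  set T := ∑' n, g n with hTdef
  by_contra hne
  have hcT' : c < T := lt_of_le_of_ne hcT hne
  have hT : 0 < T := hc.trans hcT'
  have hgT : g 0 ≤ T := hg0.le.trans hcT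
  -- Trade mass between the prefix and the tail along `δ ↦ (c + δ T, (1 - p δ) • g)`,
  -- which keeps `p c' + r T` fixed.
  set δ := min (T - c) (c - g 0) / ((p + 1) * T) with hδdef
  have hδ : (p + 1) * T * δ = min (T - c) (c - g 0) := by
    rw [hδdef]; field_simp
  have hδ0 : 0 < δ := by
    rw [hδdef]; exact div_pos (lt_min (by linarith) (by linarith)) (by positivity)
  have hδ1 : (p + 1) * T * δ ≤ T - c := hδ ▸ min_le_left _ _
  have hδ2 : (p + 1) * T * δ ≤ c - g 0 := hδ ▸ min_le_right _ _
  have hpδ : 0 ≤ p * δ := by positivity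
  have hpδT : p * δ * g 0 ≤ p * δ * T := mul_le_mul_of_nonneg_left hgT hpδ
  have hpδ1 : p * δ < 1 := by nlinarith
  have hy : prependConst p (c + δ * T) ((1 - p * δ) • g) ∈ K := by
    refine (prependConst_mem_K_iff hp).2
      ⟨smul_mem_KCone (by linarith) hg, by positivity, ?_, ?_, ?_⟩
      <;> simp only [Pi.smul_apply, smul_eq_mul, tsum_mul_left, ← hTdef] <;> nlinarith
  have hz : prependConst p (c - δ * T) ((1 + p * δ) • g) ∈ K := by
    refine (prependConst_mem_K_iff hp).2 ⟨smul_mem_KCone (by linarith) hg,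
      by nlinarith [hg.1 0, mul_nonneg hpδ hT.le], ?_, ?_, ?_⟩
      <;> simp only [Pi.smul_apply, smul_eq_mul, tsum_mul_left, ← hTdef] <;> nlinarith
  obtain ⟨hya, -⟩ := hext.2 _ hy _ hz (1 / 2) (by norm_num) (by norm_num) <| by
    rw [prependConst_combo]
    congr 1
    · ring
    · funext n; simp only [Pi.smul_apply, smul_eq_mul]; ring
  have h0 := congrFun hya 0
  simp only [prependConst_of_lt hp] at h0
  nlinarith

lemma tsum_eq_one_of_combo {y z : ℕ → ℝ} (hy : y ∈ K) (hz : z ∈ K) {t : ℝ} (ht0 : 0 < t)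
    (ht1 : t < 1) (h : ∑' n, (t * y n + (1 - t) * z n) = 1) :
    ∑' n, y n = 1 ∧ ∑' n, z n = 1 := by
  rw [(hy.2.2.1.mul_left t).tsum_add (hz.2.2.1.mul_left (1 - t)), tsum_mul_left,
    tsum_mul_left] at h
  have hy1 := hy.2.2.2.1
  have hz1 := hz.2.2.2.1
  constructor <;> nlinarith

lemma IsExtremePt.smul_of_prependConst {p : ℕ} {c r : ℝ} {g : ℕ → ℝ} (hp : 0 < p)
    (hext : IsExtremePt K (prependConst p c g)) (hT : ∑' n, g n = c) (hrc : r * c = 1) :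
    IsExtremePt K (fun n => r * g n) := by
  obtain ⟨hg, hc, -, -, hS⟩ := (prependConst_mem_K_iff hp).1 hext.1
  have hr : 0 < r := pos_of_mul_pos_left (hrc ▸ one_pos) hc.le
  refine ⟨mem_K_iff.2 ⟨smul_mem_KCone hr hg, ?_⟩, fun y hy z hz t ht0 ht1 hb => ?_⟩
  · rw [tsum_mul_left, hT, hrc]
  have hcomb : ∑' n, (t * y n + (1 - t) * z n) = 1 := by
    rw [← hb, tsum_mul_left, hT, hrc]
  obtain ⟨hy1, hz1⟩ := tsum_eq_one_of_combo hy hz ht0 ht1 hcomb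
  have lift_mem {w : ℕ → ℝ} (hw : w ∈ K) (hw1 : ∑' n, w n = 1) :
      prependConst p c (c • w) ∈ K := by
    have hw0 : w 0 ≤ 1 := hw1 ▸ hw.2.2.1.le_tsum 0 fun j _ => (hw.1 j).le
    refine prependConst_mem_K (smul_mem_KCone hc (mem_K_iff.1 hw).1) hc ?_ ?_ ?_ <;>
      simp only [Pi.smul_apply, smul_eq_mul, tsum_mul_left, hw1] <;> nlinarith
  obtain ⟨hY, hZ⟩ := hext.2 _ (lift_mem hy hy1) _ (lift_mem hz hz1) t ht0 ht1 <| by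
    rw [prependConst_combo]
    congr 1
    · ring
    · funext n
      simp only [Pi.smul_apply, smul_eq_mul]
      linear_combination c * congrFun hb n - g n * hrc
  have recover {w : ℕ → ℝ} (hw : prependConst p c (c • w) = prependConst p c g) :
      w = fun n => r * g n := funext fun n => by
    have := congrFun hw (n + p)
    simp only [prependConst_add, Pi.smul_apply, smul_eq_mul] at this
    rw [← this, ← mul_assoc, hrc, one_mul]
  exact ⟨recover hY, recover hZ⟩

theorem stmt11_general (m : ℕ) (hm : 2 ≤ m) (a : ℕ → ℝ)
    (heq : ∀ i, i + 1 < m → a i = a 0) (hlt : a (m - 1) < a (m - 2))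
    (hext : IsExtremePt K a) :
    (∀ i, i + 1 < m → a i = 1 / (m : ℝ)) ∧
    IsExtremePt K (fun i => (m : ℝ) * a (i + (m - 1))) := by
  set g := fun i => a (i + (m - 1)) with hg
  have hp : 0 < m - 1 := by omega
  have ha_eq : a = prependConst (m - 1) (a 0) g := eq_prependConst fun i hi => heq i (by omega)
  have hg0 : g 0 < a 0 := by simpa [hg, heq (m - 2) (by omega)] using hlt
  have hsum : Summable g := (summable_nat_add_iff (m - 1)).2 hext.1.2.2.1
  rw [ha_eq] at hext
  have hT : a 0 = ∑' n, g n := hext.eq_tsum_of_prependConst hp hg0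
  have hS : ((m - 1 : ℕ) : ℝ) * a 0 + ∑' n, g n = 1 := by
    rw [← tsum_prependConst hsum, hext.tsum_eq_one]
  have hm1 : ((m - 1 : ℕ) : ℝ) + 1 = m := by exact_mod_cast Nat.sub_add_cancel (by omega : 1 ≤ m)
  have hma : (m : ℝ) * a 0 = 1 := by rw [← hm1]; linarith
  have ha0 : a 0 = 1 / m := by
    rw [eq_div_iff (by positivity)]; linarith
  exact ⟨fun i hi => (heq i hi).trans ha0, hext.smul_of_prependConst hp hT.symm hma⟩

/-- If `a ∈ K`, `a_1 = … = a_{m−1} > a_m` (0-indexed: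
`a 0 = … = a (m−2) > a (m−1)`), and `a` is an extreme point of `K`, then
`a_1 = … = a_{m−1} = 1/m` and `(m a_m, m a_{m+1}, …)` is an extreme point
of `K`. -/
theorem stmt11 (m : ℕ) (hm : 2 ≤ m) (a : ℕ → ℝ) (ha : a ∈ K)
    (heq : ∀ i, i + 1 < m → a i = a 0) (hlt : a (m - 1) < a (m - 2))
    (hext : IsExtremePt K a) :
    (∀ i, i + 1 < m → a i = 1 / (m : ℝ)) ∧
    IsExtremePt K (fun i => (m : ℝ) * a (i + (m - 1))) :=
  stmt11_general m hm a heq hlt hext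
end

section
/- Let m ≥ 2 be an integer and let a ∈ K satisfy a_1 = a_2 = … = a_{m−1} > a_m. If a_1 = … = a_{m−1} = 1/m and the shifted-and-rescaled sequence (m a_m, m a_{m+1}, m a_{m+2}, …) is an extreme point of K, then a is an extreme point of K. -/
/-!
For `w ∈ K` and any `n`, the `n + 1` terms `w 0, …, w n` are each at least `w n`, and so is the
tail after them, hence `(n + 2) * w n ≤ ∑ w ≤ 1`. With `n = m - 2` this says that the hypothesis
`a (m - 2) = 1 / m` puts `a` on the face of `K` where the linear functional `w ↦ w (m - 2)`
attains its maximum `1 / m`; on that face the first `m - 1` terms are all `1 / m` and the tail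
sums to `1 / m`. So `w ↦ m * w (· + (m - 1))` maps the face injectively and affinely into `K`,
and an extreme point of `K` in its image pulls back to an extreme point of `K`.
-/

open Finset

lemma eq_of_convex_combination_eq {u v c lam : ℝ} (hu : u ≤ c) (hv : v ≤ c)
    (hl0 : 0 < lam) (hl1 : lam < 1) (h : lam * u + (1 - lam) * v = c) : u = c := by
  by_contra hne
  nlinarith [lt_of_le_of_ne hu hne]

def shiftScale (r : ℝ) (k : ℕ) (w : ℕ → ℝ) : ℕ → ℝ := fun i => r * w (i + k)

namespace K

variable {w : ℕ → ℝ}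

lemma tsum_eq_add_defect (hw : w ∈ K) (n : ℕ) :
    ∑' i, w i = (n + 2) * w n +
      (∑ i ∈ range (n + 1), (w i - w n) + (∑' i, w (i + (n + 1)) - w n)) := by
  rw [← hw.2.2.1.sum_add_tsum_nat_add (n + 1), sum_sub_distrib, sum_const, card_range,
    nsmul_eq_mul]
  push_cast
  ring

lemma apply_sub_apply_nonneg (hw : w ∈ K) {i n : ℕ} (hi : i ∈ range (n + 1)) : 0 ≤ w i - w n :=
  sub_nonneg.2 (hw.2.1 (Nat.lt_succ_iff.1 (mem_range.1 hi)))

lemma apply_le_tsum_shift (hw : w ∈ K) (n : ℕ) : w n ≤ ∑' i, w (i + (n + 1)) :=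
  (hw.2.2.2.2 n).trans_eq (tsum_congr fun i => by rw [add_comm])

lemma mul_apply_le_one (hw : w ∈ K) (n : ℕ) : (n + 2 : ℝ) * w n ≤ 1 := by
  have hdefect : 0 ≤ ∑ i ∈ range (n + 1), (w i - w n) + (∑' i, w (i + (n + 1)) - w n) :=
    add_nonneg (sum_nonneg fun _ hi => apply_sub_apply_nonneg hw hi)
      (sub_nonneg.2 (apply_le_tsum_shift hw n))
  linarith [tsum_eq_add_defect hw n, hw.2.2.2.1]

lemma eq_of_mul_apply_eq_one (hw : w ∈ K) {n : ℕ} (h : (n + 2 : ℝ) * w n = 1) :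
    (∀ i ≤ n, w i = w n) ∧ ∑' i, w (i + (n + 1)) = w n := by
  have hsum := sum_nonneg fun _ hi => apply_sub_apply_nonneg hw (n := n) hi
  have htail := sub_nonneg.2 (apply_le_tsum_shift hw n)
  have hdefect := tsum_eq_add_defect hw n
  have hsum0 : ∑ i ∈ range (n + 1), (w i - w n) = 0 := by linarith [hw.2.2.2.1]
  refine ⟨fun i hi => ?_, by linarith [hw.2.2.2.1]⟩
  have := (sum_eq_zero_iff_of_nonneg fun _ hj => apply_sub_apply_nonneg hw hj).1 hsum0 i
    (mem_range.2 (Nat.lt_succ_of_le hi))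
  linarith

lemma shiftScale_mem (hw : w ∈ K) {r : ℝ} (hr : 0 < r) (k : ℕ)
    (hsum : r * ∑' i, w (i + k) ≤ 1) : shiftScale r k w ∈ K := by
  obtain ⟨hpos, hanti, hsumm, -, htail⟩ := hw
  refine ⟨fun i => mul_pos hr (hpos _), fun i j hij => ?_,
    ((summable_nat_add_iff k).2 hsumm).mul_left r, by unfold shiftScale; rwa [tsum_mul_left],
    fun n => ?_⟩
  · exact mul_le_mul_of_nonneg_left (hanti (by omega)) hr.le
  · calc r * w (n + k) ≤ r * ∑' i, w (n + k + 1 + i) := mul_le_mul_of_nonneg_left (htail _) hr.le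
      _ = ∑' i, r * w (n + 1 + i + k) := by
        rw [← tsum_mul_left]
        exact tsum_congr fun i => by rw [show n + k + 1 + i = n + 1 + i + k by omega]

lemma shiftScale_mem_of_mul_apply_eq_one (hw : w ∈ K) {n : ℕ} (h : (n + 2 : ℝ) * w n = 1) :
    shiftScale (n + 2) (n + 1) w ∈ K :=
  shiftScale_mem hw (by positivity) _ (by rw [(eq_of_mul_apply_eq_one hw h).2, h])

lemma eq_of_shiftScale_eq {a : ℕ → ℝ} (hw : w ∈ K) (ha : a ∈ K) {n : ℕ}
    (hwn : (n + 2 : ℝ) * w n = 1) (han : (n + 2 : ℝ) * a n = 1)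
    (hshift : shiftScale (n + 2) (n + 1) w = shiftScale (n + 2) (n + 1) a) : w = a := by
  have hn : (n + 2 : ℝ) ≠ 0 := by positivity
  funext i
  rcases le_or_gt i n with hi | hi
  · rw [(eq_of_mul_apply_eq_one hw hwn).1 i hi, (eq_of_mul_apply_eq_one ha han).1 i hi]
    exact mul_left_cancel₀ hn (hwn.trans han.symm)
  · have := congrFun hshift (i - (n + 1))
    simp only [shiftScale, Nat.sub_add_cancel (Nat.succ_le_of_lt hi)] at this
    exact mul_left_cancel₀ hn this

lemma mul_apply_eq_one_of_convex_combination {a y z : ℕ → ℝ} (hy : y ∈ K) (hz : z ∈ K) {n : ℕ}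
    (han : (n + 2 : ℝ) * a n = 1) {lam : ℝ} (hl0 : 0 < lam) (hl1 : lam < 1)
    (hcomb : a = fun i => lam * y i + (1 - lam) * z i) : (n + 2 : ℝ) * y n = 1 := by
  subst hcomb
  exact eq_of_convex_combination_eq (mul_apply_le_one hy n) (mul_apply_le_one hz n) hl0 hl1
    (by linear_combination han)

theorem isExtremePt_of_isExtremePt_shiftScale {a : ℕ → ℝ} (ha : a ∈ K) {n : ℕ}
    (han : (n + 2 : ℝ) * a n = 1) (hext : IsExtremePt K (shiftScale (n + 2) (n + 1) a)) :
    IsExtremePt K a := by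
  refine ⟨ha, fun y hy z hz lam hl0 hl1 hcomb => ?_⟩
  have hyn := mul_apply_eq_one_of_convex_combination hy hz han hl0 hl1 hcomb
  have hzn := mul_apply_eq_one_of_convex_combination hz hy han (sub_pos.2 hl1) (by linarith)
    (by rw [hcomb]; funext i; ring)
  have hshift : shiftScale (n + 2) (n + 1) a = fun i =>
      lam * shiftScale (n + 2) (n + 1) y i + (1 - lam) * shiftScale (n + 2) (n + 1) z i := by
    rw [hcomb]; funext i; simp only [shiftScale]; ring
  obtain ⟨hy', hz'⟩ := hext.2 _ (shiftScale_mem_of_mul_apply_eq_one hy hyn)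
    _ (shiftScale_mem_of_mul_apply_eq_one hz hzn) lam hl0 hl1 hshift
  exact ⟨eq_of_shiftScale_eq hy ha hyn han hy', eq_of_shiftScale_eq hz ha hzn han hz'⟩

end K

theorem stmt12_general (m : ℕ) (hm : 2 ≤ m) (a : ℕ → ℝ) (ha : a ∈ K)
    (heq : ∀ i, i + 1 < m → a i = 1 / (m : ℝ))
    (hext : IsExtremePt K (fun i => (m : ℝ) * a (i + (m - 1)))) :
    IsExtremePt K a := by
  obtain ⟨n, rfl⟩ : ∃ n, m = n + 2 := ⟨m - 2, by omega⟩
  have han : (n + 2 : ℝ) * a n = 1 := by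
    rw [heq n (by omega)]; push_cast; field_simp
  refine K.isExtremePt_of_isExtremePt_shiftScale ha han ?_
  convert hext using 2 with i
  simp [shiftScale]

/-- If `a ∈ K`, `a_1 = … = a_{m−1} > a_m` (0-indexed:
`a 0 = … = a (m−2) > a (m−1)`), the common value is `1/m`, and
`(m a_m, m a_{m+1}, …)` is an extreme point of `K`, then `a` is an extreme
point of `K`. -/
theorem stmt12 (m : ℕ) (hm : 2 ≤ m) (a : ℕ → ℝ) (ha : a ∈ K)
    (heq : ∀ i, i + 1 < m → a i = 1 / (m : ℝ)) (hlt : a (m - 1) < a (m - 2))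
    (hext : IsExtremePt K (fun i => (m : ℝ) * a (i + (m - 1)))) :
    IsExtremePt K a :=
  stmt12_general m hm a ha heq hext
end

section
/- Let (k_n)_{n≥1} be a sequence of integers with k_n ≥ 2 for all n, and let a be the sequence obtained by concatenating, for n = 1, 2, 3, …, a block of k_n − 1 consecutive entries each equal to 1/(k_1 k_2 ⋯ k_n). Then a is an extreme point of K. -/
/-!
Every constraint defining `K` is a linear inequality, and `a` satisfies three families of them
with equality: `∑ a = 1`, `a (j + 1) = a j` inside each block, and `a j = ∑_{i > j} a i` at the
last entry of each block. If `a = λ y + (1 - λ) z` with `y, z ∈ K`, each of these is then tight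
for `y` as well. They determine `y`: if `T m` is the tail sum of `y` from the start of block `m`,
the block consists of `k m - 1` entries all equal to `T (m + 1)`, so `T m = k m * T (m + 1)`;
with `T 0 = 1` this gives `T m = 1 / (k 0 ⋯ k (m - 1))`, hence `y = a`.
-/

open Filter Finset Topology

lemma Summable.comp_nat_add_left {f : ℕ → ℝ} (hf : Summable f) (n : ℕ) :
    Summable fun i => f (n + i) := by
  simpa only [add_comm _ n] using (summable_nat_add_iff n).2 hf

theorem Summable.tsum_nat_add_eq_sub {f : ℕ → ℝ} (hf : Summable f) (n : ℕ) :
    ∑' i, f (n + i) = ∑' i, f i - ∑ i ∈ range n, f i := by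
  rw [← hf.sum_add_tsum_nat_add n]
  simp only [add_comm n, add_sub_cancel_left]

theorem Summable.tsum_nat_add_antitone {f : ℕ → ℝ} (hf : Summable f) (h0 : ∀ n, 0 ≤ f n) :
    Antitone fun n => ∑' i, f (n + i) := by
  intro n m hnm
  simp only [hf.tsum_nat_add_eq_sub]
  gcongr
  exact fun i _ _ => h0 i

theorem eq_of_convex_comb_eq_of_le {lam u u' v v' : ℝ} (h0 : 0 < lam) (h1 : lam < 1)
    (hu : u ≤ u') (hv : v ≤ v')
    (h : lam * u + (1 - lam) * v = lam * u' + (1 - lam) * v') : u = u' :=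
  mul_left_cancel₀ h0.ne' ((add_eq_add_iff_eq_and_eq (mul_le_mul_of_nonneg_left hu h0.le)
    (mul_le_mul_of_nonneg_left hv (sub_nonneg.2 h1.le))).1 h).1

theorem Nat.eq_of_succ_eq_on_Ico {α : Type*} {f : ℕ → α} {a b : ℕ}
    (h : ∀ j, a ≤ j → j + 1 < b → f (j + 1) = f j) {i j : ℕ} (hi : a ≤ i) (hij : i ≤ j)
    (hj : j < b) : f j = f i := by
  induction j, hij using Nat.le_induction with
  | base => rfl
  | succ j hij ih => rw [h j (hi.trans hij) hj, ih (by omega)]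

def blockStart (k : ℕ → ℕ) (m : ℕ) : ℕ := ∑ i ∈ range m, (k i - 1)

noncomputable def blockProd (k : ℕ → ℕ) (m : ℕ) : ℝ := ∏ i ∈ range m, (k i : ℝ)

def IsBlockConcat (k : ℕ → ℕ) (a : ℕ → ℝ) : Prop :=
  ∀ m j, blockStart k m ≤ j → j < blockStart k (m + 1) → a j = 1 / blockProd k (m + 1)

section Blocks

variable {k : ℕ → ℕ}

@[simp] lemma blockStart_zero : blockStart k 0 = 0 := sum_range_zero _

lemma blockStart_succ (m : ℕ) : blockStart k (m + 1) = blockStart k m + (k m - 1) :=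
  sum_range_succ _ _

@[simp] lemma blockProd_zero : blockProd k 0 = 1 := prod_range_zero _

lemma blockProd_succ (m : ℕ) : blockProd k (m + 1) = blockProd k m * k m :=
  prod_range_succ _ _

lemma sum_range_blockStart_succ {y : ℕ → ℝ} {m : ℕ} {c : ℝ}
    (hc : ∀ j, blockStart k m ≤ j → j < blockStart k (m + 1) → y j = c) :
    ∑ j ∈ range (blockStart k (m + 1)), y j =
      ∑ j ∈ range (blockStart k m), y j + (k m - 1 : ℕ) * c := by
  rw [range_eq_Ico, range_eq_Ico, ← sum_Ico_consecutive _ (Nat.zero_le _)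
    (blockStart_succ m ▸ Nat.le_add_right _ _),
    sum_congr rfl fun j hj => hc j (mem_Ico.1 hj).1 (mem_Ico.1 hj).2, sum_const,
    Nat.card_Ico, blockStart_succ, Nat.add_sub_cancel_left, nsmul_eq_mul]

variable (hk : ∀ n, 2 ≤ k n)
include hk

lemma blockStart_strictMono : StrictMono (blockStart k) :=
  strictMono_nat_of_lt_succ fun m => by have := hk m; rw [blockStart_succ]; omega

lemma blockProd_pos (m : ℕ) : 0 < blockProd k m :=
  prod_pos fun i _ => by have := hk i; positivity

lemma blockProd_le_succ (m : ℕ) : blockProd k m ≤ blockProd k (m + 1) := by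
  rw [blockProd_succ]
  exact le_mul_of_one_le_right (blockProd_pos hk m).le
    (by exact_mod_cast (hk m).trans' one_le_two)

lemma tendsto_one_div_blockProd : Tendsto (fun m => 1 / blockProd k m) atTop (𝓝 0) := by
  have h2 : ∀ m, (2 : ℝ) ^ m ≤ blockProd k m := fun m => by
    calc (2 : ℝ) ^ m = ∏ _i ∈ range m, (2 : ℝ) := by rw [prod_const, card_range]
      _ ≤ blockProd k m :=
        prod_le_prod (fun _ _ => zero_le_two) fun i _ => by exact_mod_cast hk i
  simp only [one_div]
  exact (tendsto_atTop_mono h2 (tendsto_pow_atTop_atTop_of_one_lt one_lt_two)).inv_tendsto_atTop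

lemma exists_mem_block (j : ℕ) : ∃ m, blockStart k m ≤ j ∧ j < blockStart k (m + 1) := by
  induction j with
  | zero => exact ⟨0, le_rfl, blockStart_strictMono hk (Nat.lt_add_one 0)⟩
  | succ j ih =>
    obtain ⟨m, hm, hm'⟩ := ih
    rcases (show j + 1 ≤ _ from hm').lt_or_eq with h | h
    · exact ⟨m, by omega, h⟩
    · exact ⟨m + 1, h.ge, h ▸ blockStart_strictMono hk (Nat.lt_add_one _)⟩

lemma IsBlockConcat.ext {a b : ℕ → ℝ} (ha : IsBlockConcat k a) (hb : IsBlockConcat k b) :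
    a = b := funext fun j => by
  obtain ⟨m, hm, hm'⟩ := exists_mem_block hk j
  rw [ha m j hm hm', hb m j hm hm']

end Blocks

namespace IsBlockConcat

variable {k : ℕ → ℕ} {a : ℕ → ℝ} (hk : ∀ n, 2 ≤ k n) (ha : IsBlockConcat k a)
include hk ha

lemma pos (j : ℕ) : 0 < a j := by
  obtain ⟨m, hm, hm'⟩ := exists_mem_block hk j
  rw [ha m j hm hm']
  exact one_div_pos.2 (blockProd_pos hk _)

lemma antitone : Antitone a := by
  refine antitone_nat_of_succ_le fun j => ?_
  obtain ⟨m, hm, hm'⟩ := exists_mem_block hk j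
  rcases (show j + 1 ≤ _ from hm').lt_or_eq with h | h
  · rw [ha m j hm hm', ha m (j + 1) (by omega) h]
  · have h' : j + 1 < blockStart k (m + 1 + 1) := h ▸ blockStart_strictMono hk (Nat.lt_add_one _)
    rw [ha m j hm hm', ha (m + 1) (j + 1) h.ge h']
    exact one_div_le_one_div_of_le (blockProd_pos hk _) (blockProd_le_succ hk _)

lemma sum_range_blockStart (m : ℕ) :
    ∑ j ∈ range (blockStart k m), a j = 1 - 1 / blockProd k m := by
  induction m with
  | zero => simp
  | succ m ih =>
    have hk1 : 1 ≤ k m := (hk m).trans' one_le_two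
    have hQ := blockProd_pos hk m
    rw [sum_range_blockStart_succ (ha m), ih, blockProd_succ, Nat.cast_sub hk1]
    field_simp
    ring

lemma summable : Summable a := by
  refine summable_of_sum_range_le (c := 1) (fun j => (ha.pos hk j).le) fun n => ?_
  calc ∑ j ∈ range n, a j ≤ ∑ j ∈ range (blockStart k n), a j :=
        sum_le_sum_of_subset_of_nonneg (range_mono (blockStart_strictMono hk).le_apply)
          fun j _ _ => (ha.pos hk j).le
    _ ≤ 1 := by
        rw [ha.sum_range_blockStart hk]
        linarith [one_div_pos.2 (blockProd_pos hk n)]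

lemma tsum_eq_one : ∑' j, a j = 1 := by
  refine tendsto_nhds_unique
    (((ha.summable hk).hasSum.tendsto_sum_nat).comp (blockStart_strictMono hk).tendsto_atTop) ?_
  simp only [Function.comp_def, ha.sum_range_blockStart hk]
  simpa using (tendsto_one_div_blockProd hk).const_sub 1

lemma tsum_blockStart_add (m : ℕ) :
    ∑' i, a (blockStart k m + i) = 1 / blockProd k m := by
  rw [(ha.summable hk).tsum_nat_add_eq_sub, ha.tsum_eq_one hk, ha.sum_range_blockStart hk]
  ring

lemma eq_tsum_of_succ_eq_blockStart {m j : ℕ} (hj : j + 1 = blockStart k (m + 1)) :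
    a j = ∑' i, a (j + 1 + i) := by
  have hm := blockStart_strictMono hk (Nat.lt_add_one m)
  rw [ha m j (by omega) (by omega), hj, ha.tsum_blockStart_add hk]

lemma le_tsum (j : ℕ) : a j ≤ ∑' i, a (j + 1 + i) := by
  obtain ⟨m, hm, hm'⟩ := exists_mem_block hk j
  calc a j = ∑' i, a (blockStart k (m + 1) + i) := by
        rw [ha m j hm hm', ha.tsum_blockStart_add hk]
    _ ≤ ∑' i, a (j + 1 + i) :=
        (ha.summable hk).tsum_nat_add_antitone (fun j => (ha.pos hk j).le) hm'

lemma mem_K : a ∈ K :=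
  ⟨ha.pos hk, ha.antitone hk, ha.summable hk, (ha.tsum_eq_one hk).le, ha.le_tsum hk⟩

end IsBlockConcat

theorem isBlockConcat_of_tight {k : ℕ → ℕ} (hk : ∀ n, 2 ≤ k n) {y : ℕ → ℝ} (hy : Summable y)
    (hsum : ∑' n, y n = 1)
    (hconst : ∀ m j, blockStart k m ≤ j → j + 1 < blockStart k (m + 1) → y (j + 1) = y j)
    (hlast : ∀ m j, j + 1 = blockStart k (m + 1) → y j = ∑' i, y (j + 1 + i)) :
    IsBlockConcat k y := by
  -- `T m` is the tail sum of `y` from the start of block `m`.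
  set T : ℕ → ℝ := fun m => 1 - ∑ j ∈ range (blockStart k m), y j with hT
  have hblock : ∀ m j, blockStart k m ≤ j → j < blockStart k (m + 1) → y j = T (m + 1) := by
    intro m j hj hj'
    obtain ⟨e, he⟩ : ∃ e, e + 1 = blockStart k (m + 1) := ⟨blockStart k (m + 1) - 1, by omega⟩
    calc y j = y e := (Nat.eq_of_succ_eq_on_Ico (hconst m) hj (by omega) (by omega)).symm
      _ = T (m + 1) := by rw [hlast m e he, he, hy.tsum_nat_add_eq_sub, hsum]
  have hT_eq : ∀ m, T m = 1 / blockProd k m := by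
    intro m
    induction m with
    | zero => simp [hT]
    | succ m ih =>
      have hk1 : 1 ≤ k m := (hk m).trans' one_le_two
      have hQ := blockProd_pos hk m
      have hrec : T m = k m * T (m + 1) := by
        have := sum_range_blockStart_succ (hblock m)
        rw [Nat.cast_sub hk1] at this
        simp only [hT] at this ⊢
        linear_combination this
      rw [ih] at hrec
      rw [blockProd_succ, eq_div_iff (mul_pos hQ (by positivity)).ne']
      field_simp at hrec ⊢
      linear_combination -hrec
  intro m j hj hj'
  rw [hblock m j hj hj', hT_eq]

theorem IsBlockConcat.of_eq_convex_comb {k : ℕ → ℕ} (hk : ∀ n, 2 ≤ k n) {a y z : ℕ → ℝ}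
    (ha : IsBlockConcat k a) (hy : y ∈ K) (hz : z ∈ K) {lam : ℝ} (h0 : 0 < lam) (h1 : lam < 1)
    (h : a = fun n => lam * y n + (1 - lam) * z n) : IsBlockConcat k y := by
  obtain ⟨-, hy_anti, hy_sum, hy_le, hy_tail⟩ := hy
  obtain ⟨-, hz_anti, hz_sum, hz_le, hz_tail⟩ := hz
  have htail (n : ℕ) : ∑' i, a (n + i) = lam * ∑' i, y (n + i) + (1 - lam) * ∑' i, z (n + i) := by
    rw [h, ((hy_sum.comp_nat_add_left n).mul_left lam).tsum_add
      ((hz_sum.comp_nat_add_left n).mul_left _), tsum_mul_left, tsum_mul_left]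
  refine isBlockConcat_of_tight hk hy_sum ?_ (fun m j hj hj' => ?_) (fun m j hj => ?_)
  · refine eq_of_convex_comb_eq_of_le h0 h1 hy_le hz_le ?_
    have h_one := htail 0
    simp only [zero_add, ha.tsum_eq_one hk] at h_one
    linear_combination -h_one
  · refine eq_of_convex_comb_eq_of_le h0 h1 (hy_anti j.le_succ) (hz_anti j.le_succ) ?_
    have := congrFun h
    rw [← this, ← this, ha m j hj (by omega), ha m (j + 1) (by omega) hj']
  · refine eq_of_convex_comb_eq_of_le h0 h1 (hy_tail j) (hz_tail j) ?_
    rw [← congrFun h, ← htail, ← ha.eq_tsum_of_succ_eq_blockStart hk hj]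

/-- If `a` is obtained by concatenating, for `m = 0, 1, 2, …`, a block of
`k_m − 1` entries each equal to `1/(k_0 ⋯ k_m)` (0-indexed), then `a` is an
extreme point of `K`. -/
theorem stmt13 (k : ℕ → ℕ) (hk : ∀ n, 2 ≤ k n) (a : ℕ → ℝ)
    (ha : ∀ m j : ℕ, (∑ i ∈ Finset.range m, (k i - 1)) ≤ j →
      j < ∑ i ∈ Finset.range (m + 1), (k i - 1) →
      a j = 1 / ∏ i ∈ Finset.range (m + 1), (k i : ℝ)) :
    IsExtremePt K a := by
  have ha : IsBlockConcat k a := ha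
  refine ⟨ha.mem_K hk, fun y hy z hz lam h0 h1 h => ⟨?_, ?_⟩⟩
  · exact (ha.of_eq_convex_comb hk hy hz h0 h1 h).ext hk ha
  · have h' : a = fun n => (1 - lam) * z n + (1 - (1 - lam)) * y n := by
      rw [h]; ext n; ring
    exact (ha.of_eq_convex_comb hk hz hy (by linarith) (by linarith) h').ext hk ha
end
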